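/- arXiv:2101.00494 — 3 statements merged into one kernel-verified Lean document; each statement's English description precedes it below -/
import Mathlib

section
/- Let A and B be real symmetric positive definite d×d matrices with A ⪯ B (i.e., B − A is positive semidefinite). If A⁻¹ is NOT ⪯ 2B⁻¹ (i.e., 2B⁻¹ − A⁻¹ is not positive semidefinite), then log det B ≥ log det A + log 2. -/
/-!
With `T = B^{-1/2}`, the matrix `C = T A T` satisfies `0 < C ≤ 1`, so every eigenvalue of `C`
is at least `det C = ∏ λⱼ = det A / det B`. Functional calculus turns this into
`det C • C⁻¹ ≤ 1`, which conjugated back by `T` reads `(det A / det B) • A⁻¹ ≤ B⁻¹`.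
If `det B < 2 det A`, this already gives `A⁻¹ ≤ 2 B⁻¹`.
-/

open Matrix
open scoped MatrixOrder

namespace Matrix

variable {n : Type*} [Fintype n] [DecidableEq n] {A B C : Matrix n n ℝ}

lemma PosSemidef.det_le_eigenvalues (hC : C.PosSemidef) (hC1 : C ≤ 1) (i : n) :
    C.det ≤ hC.1.eigenvalues i := by
  have hle : ∀ j, hC.1.eigenvalues j ≤ 1 := fun j =>
    (CFC.le_one_iff C).1 hC1 _ (hC.1.eigenvalues_mem_spectrum_real j)
  rw [hC.1.det_eq_prod_eigenvalues, ← Finset.mul_prod_erase _ _ (Finset.mem_univ i)]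
  simp only [RCLike.ofReal_real_eq_id, id]
  exact mul_le_of_le_one_right (hC.eigenvalues_nonneg i)
    (Finset.prod_le_one (fun j _ => hC.eigenvalues_nonneg j) fun j _ => hle j)

lemma PosDef.det_smul_inv_le_one (hC : C.PosDef) (hC1 : C ≤ 1) : C.det • C⁻¹ ≤ 1 := by
  rw [nonsing_inv_eq_ringInverse, ← cfc_ringInverse_id (R := ℝ) C hC.isUnit,
    ← cfc_const_mul _ _ C (C.finite_real_spectrum.continuousOn _)]
  refine cfc_le_one _ _ ?_
  rw [hC.1.spectrum_real_eq_range_eigenvalues]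
  rintro _ ⟨i, rfl⟩
  rw [← div_eq_mul_inv, div_le_one (hC.eigenvalues_pos i)]
  exact hC.posSemidef.det_le_eigenvalues hC1 i

lemma PosDef.det_div_det_smul_inv_le_inv (hA : A.PosDef) (hB : B.PosDef) (hAB : A ≤ B) :
    (A.det / B.det) • A⁻¹ ≤ B⁻¹ := by
  set T := CFC.sqrt B⁻¹
  have hTT : T * T = B⁻¹ := CFC.sqrt_mul_sqrt_self _ hB.inv.posSemidef.nonneg
  have hT : IsSelfAdjoint T := (CFC.sqrt_nonneg _).isSelfAdjoint
  have hTunit : IsUnit T := (CFC.isUnit_sqrt_iff _ hB.inv.posSemidef.nonneg).2 hB.inv.isUnit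
  have hTdet : IsUnit T.det := (isUnit_iff_isUnit_det T).1 hTunit
  have hTBT : T * B * T = 1 := by
    rw [← mul_eq_one_comm, ← mul_assoc, hTT,
      nonsing_inv_mul _ ((isUnit_iff_isUnit_det B).1 hB.isUnit)]
  have hC : (T * A * T).PosDef := by
    simpa only [hT.star_eq] using (IsUnit.posDef_star_left_conjugate_iff hTunit).2 hA
  have hC1 : T * A * T ≤ 1 := hTBT ▸ hT.conjugate_le_conjugate hAB
  have hdet : (T * A * T).det = A.det / B.det := by
    have hdetTT := congrArg det hTT
    rw [det_mul, det_nonsing_inv, Ring.inverse_eq_inv'] at hdetTT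
    rw [det_mul, det_mul, div_eq_mul_inv, ← hdetTT]
    ring
  have hinv : T * (T * A * T)⁻¹ * T = A⁻¹ := by
    rw [Matrix.mul_inv_rev, Matrix.mul_inv_rev]
    simp only [← mul_assoc, mul_nonsing_inv _ hTdet, one_mul]
    rw [mul_assoc, nonsing_inv_mul _ hTdet, mul_one]
  have h := hT.conjugate_le_conjugate (hC.det_smul_inv_le_one hC1)
  rwa [Matrix.mul_smul, Matrix.smul_mul, hinv, hdet, mul_one, hTT] at h

end Matrix

theorem stmt_1 (d : ℕ) (A B : Matrix (Fin d) (Fin d) ℝ)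
    (hA : A.PosDef) (hB : B.PosDef) (hAB : (B - A).PosSemidef)
    (h : ¬ ((2 : ℝ) • B⁻¹ - A⁻¹).PosSemidef) :
    Real.log A.det + Real.log 2 ≤ Real.log B.det := by
  have hA₀ := hA.det_pos
  have hB₀ := hB.det_pos
  rw [← Real.log_mul hA₀.ne' two_ne_zero]
  refine Real.log_le_log (by positivity) (not_lt.1 fun hlt => h ?_)
  have hc : 0 ≤ 2 * (A.det / B.det) - 1 := by
    rw [sub_nonneg, ← div_le_iff₀' two_pos, le_div_iff₀ hB₀]
    linarith
  have key : (B⁻¹ - (A.det / B.det) • A⁻¹).PosSemidef :=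
    hA.det_div_det_smul_inv_le_inv hB hAB
  convert (key.smul (zero_le_two (α := ℝ))).add (hA.inv.posSemidef.smul hc) using 1
  module
end

section
/- Let A be a real symmetric positive definite d×d matrix and Δ a real symmetric positive semidefinite d×d matrix, and set B = A + Δ. If there exists a unit vector x with xᵀ(A⁻¹ − 2B⁻¹)x ≥ 0, then the maximum eigenvalue of I + Δ^{1/2} A⁻¹ Δ^{1/2} is at least 2. -/
open Matrix

section

open scoped ComplexOrder

/-- The PSD square root, as `Matrix.PosSemidef.sqrt` was defined in Mathlib of December 2024
(removed since). -/
noncomputable def Matrix.PosSemidef.sqrt {n 𝕜 : Type*} [Fintype n] [DecidableEq n] [RCLike 𝕜]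
    {A : Matrix n n 𝕜} (hA : A.PosSemidef) : Matrix n n 𝕜 :=
  hA.1.eigenvectorUnitary.1 * diagonal ((↑) ∘ (√·) ∘ hA.1.eigenvalues) *
    (star hA.1.eigenvectorUnitary : Matrix n n 𝕜)

end

/-!
Put `y = B⁻¹ x`, `S = Δ^{1/2}`, `a = yᵀAy`, `p = yᵀΔy = ‖Sy‖²` and `q = (Δy)ᵀA⁻¹(Δy)`. Since
`x = Ay + Δy`, we get `xᵀA⁻¹x = a + 2p + q` and `xᵀB⁻¹x = a + p`, so the hypothesis says `q ≥ a`.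
If every eigenvalue of `I + SA⁻¹S` were below `2`, then `1 - SA⁻¹S` would be positive definite,
giving `q < p` whenever `Sy ≠ 0`; Cauchy–Schwarz for the inner product defined by `A⁻¹`, applied
to `Ay` and `Δy`, gives `p² ≤ a q`. Together these force `q < a`.
-/

open scoped ComplexOrder Pointwise

namespace Matrix

section RCLike

variable {n 𝕜 : Type*} [Fintype n] [DecidableEq n] [RCLike 𝕜]

lemma PosSemidef.posSemidef_sqrt {A : Matrix n n 𝕜} (hA : A.PosSemidef) :
    hA.sqrt.PosSemidef := by
  have hD : (diagonal ((↑) ∘ (√·) ∘ hA.1.eigenvalues : n → 𝕜)).PosSemidef :=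
    posSemidef_diagonal_iff.mpr fun i => by
      simp only [Function.comp_apply]; exact_mod_cast Real.sqrt_nonneg _
  simpa only [PosSemidef.sqrt, star_eq_conjTranspose] using
    hD.mul_mul_conjTranspose_same (hA.1.eigenvectorUnitary : Matrix n n 𝕜)

lemma PosSemidef.sqrt_mul_self {A : Matrix n n 𝕜} (hA : A.PosSemidef) :
    hA.sqrt * hA.sqrt = A := by
  set U : Matrix n n 𝕜 := (hA.1.eigenvectorUnitary : Matrix n n 𝕜)
  set D : Matrix n n 𝕜 := diagonal ((↑) ∘ (√·) ∘ hA.1.eigenvalues)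
  have hDD : D * D = diagonal (RCLike.ofReal ∘ hA.1.eigenvalues) := by
    rw [diagonal_mul_diagonal]
    congr 1
    funext i
    simp only [Function.comp_apply]
    rw [← RCLike.ofReal_mul, Real.mul_self_sqrt (hA.eigenvalues_nonneg i)]
  conv_rhs => rw [hA.1.spectral_theorem, Unitary.conjStarAlgAut_apply]
  calc hA.sqrt * hA.sqrt = U * D * (star U * U) * D * star U := by
        simp only [PosSemidef.sqrt, U, D, Matrix.mul_assoc]
    _ = _ := by
      rw [Unitary.coe_star_mul_self, Matrix.mul_one, Matrix.mul_assoc U D D, hDD]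

lemma IsHermitian.posDef_smul_one_sub {M : Matrix n n 𝕜} (hM : M.IsHermitian) {c : ℝ}
    (h : ∀ i, hM.eigenvalues i < c) : (c • 1 - M).PosDef := by
  have hcM : (c • 1 - M).IsHermitian := (isHermitian_one.smul (IsSelfAdjoint.all c)).sub hM
  refine hcM.posDef_iff_eigenvalues_pos.mpr fun i => ?_
  have hmem : hcM.eigenvalues i ∈ ({c} : Set ℝ) - spectrum ℝ M := by
    rw [spectrum.singleton_sub_eq, Algebra.algebraMap_eq_smul_one]
    exact hcM.eigenvalues_mem_spectrum_real i
  rw [hM.spectrum_real_eq_range_eigenvalues] at hmem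
  obtain ⟨_, rfl, _, ⟨j, rfl⟩, hj⟩ := hmem
  simp only [← hj, sub_pos, h j]

end RCLike

section Real

variable {n : Type*} [Fintype n]

lemma IsSymm.dotProduct_mulVec_comm {M : Matrix n n ℝ} (hM : M.IsSymm) (u v : n → ℝ) :
    u ⬝ᵥ (M *ᵥ v) = (M *ᵥ u) ⬝ᵥ v := by
  rw [dotProduct_mulVec, ← mulVec_transpose, hM.eq]

lemma PosSemidef.dotProduct_mulVec_sq_le {M : Matrix n n ℝ} (hM : M.PosSemidef)
    (u v : n → ℝ) :
    (u ⬝ᵥ (M *ᵥ v)) ^ 2 ≤ (u ⬝ᵥ (M *ᵥ u)) * (v ⬝ᵥ (M *ᵥ v)) := by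
  let _ := M.toSeminormedAddCommGroup hM
  let _ := M.toInnerProductSpace hM
  have := real_inner_mul_inner_self_le u v
  change (M *ᵥ v) ⬝ᵥ star u * ((M *ᵥ v) ⬝ᵥ star u) ≤
    (M *ᵥ u) ⬝ᵥ star u * ((M *ᵥ v) ⬝ᵥ star v) at this
  simpa only [star_trivial, dotProduct_comm _ u, dotProduct_comm _ v, sq] using this

variable [DecidableEq n]

lemma mulVec_dotProduct_inv_mulVec {A : Matrix n n ℝ} (hA : A.IsSymm) (hdet : IsUnit A.det)
    (y w : n → ℝ) : (A *ᵥ y) ⬝ᵥ (A⁻¹ *ᵥ w) = y ⬝ᵥ w := by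
  rw [← hA.dotProduct_mulVec_comm, mulVec_mulVec, mul_nonsing_inv _ hdet, one_mulVec]

lemma dotProduct_inv_sub_two_smul_inv_add_mulVec {A : Matrix n n ℝ} (Δ : Matrix n n ℝ)
    (hA : A.IsSymm) (hAdet : IsUnit A.det) (hBdet : IsUnit (A + Δ).det) (y : n → ℝ) :
    ((A + Δ) *ᵥ y) ⬝ᵥ ((A⁻¹ - (2 : ℝ) • (A + Δ)⁻¹) *ᵥ ((A + Δ) *ᵥ y)) =
      (Δ *ᵥ y) ⬝ᵥ (A⁻¹ *ᵥ (Δ *ᵥ y)) - y ⬝ᵥ (A *ᵥ y) := by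
  have hB : ((A + Δ) *ᵥ y) ⬝ᵥ ((A + Δ)⁻¹ *ᵥ ((A + Δ) *ᵥ y)) =
      y ⬝ᵥ (A *ᵥ y) + y ⬝ᵥ (Δ *ᵥ y) := by
    rw [mulVec_mulVec, nonsing_inv_mul _ hBdet, one_mulVec, dotProduct_comm, add_mulVec,
      dotProduct_add]
  have hcross : (Δ *ᵥ y) ⬝ᵥ (A⁻¹ *ᵥ (A *ᵥ y)) = y ⬝ᵥ (Δ *ᵥ y) := by
    rw [dotProduct_comm, ← hA.inv.dotProduct_mulVec_comm, mulVec_dotProduct_inv_mulVec hA hAdet]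
  rw [sub_mulVec, dotProduct_sub, smul_mulVec, dotProduct_smul, smul_eq_mul, hB, add_mulVec,
    mulVec_add, add_dotProduct, dotProduct_add, dotProduct_add,
    mulVec_dotProduct_inv_mulVec hA hAdet, mulVec_dotProduct_inv_mulVec hA hAdet, hcross]
  ring

lemma PosDef.dotProduct_inv_mulVec_lt_of_posDef_one_sub {A S : Matrix n n ℝ} (hA : A.PosDef)
    (hS : S.IsSymm) (hSAS : (1 - S * A⁻¹ * S).PosDef) {y : n → ℝ} (hy : y ≠ 0) :
    ((S * S) *ᵥ y) ⬝ᵥ (A⁻¹ *ᵥ ((S * S) *ᵥ y)) < y ⬝ᵥ (A *ᵥ y) := by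
  have hAsymm : A.IsSymm := isHermitian_iff_isSymm.mp hA.isHermitian
  have hAdet : IsUnit A.det := hA.det_pos.ne'.isUnit
  set z := S *ᵥ y
  rw [← mulVec_mulVec]
  set a := y ⬝ᵥ (A *ᵥ y)
  set q := (S *ᵥ z) ⬝ᵥ (A⁻¹ *ᵥ (S *ᵥ z))
  have ha : 0 < a := by simpa only [star_trivial] using hA.dotProduct_mulVec_pos hy
  have hq : 0 ≤ q := by
    simpa only [star_trivial] using hA.inv.posSemidef.dotProduct_mulVec_nonneg (S *ᵥ z)
  rcases eq_or_ne z 0 with hz | hz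
  · simpa [q, hz] using ha
  have hqp : q < z ⬝ᵥ z := by
    have h := hSAS.dotProduct_mulVec_pos hz
    rwa [star_trivial, sub_mulVec, one_mulVec, dotProduct_sub, ← mulVec_mulVec, ← mulVec_mulVec,
      hS.dotProduct_mulVec_comm z (A⁻¹ *ᵥ (S *ᵥ z)), sub_pos] at h
  have hcs : (z ⬝ᵥ z) ^ 2 ≤ a * q := by
    have h := hA.inv.posSemidef.dotProduct_mulVec_sq_le (A *ᵥ y) (S *ᵥ z)
    rwa [mulVec_dotProduct_inv_mulVec hAsymm hAdet, mulVec_dotProduct_inv_mulVec hAsymm hAdet,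
      hS.dotProduct_mulVec_comm] at h
  nlinarith

end Real
end Matrix

theorem stmt_4 (d : ℕ) (A Δ B : Matrix (Fin d) (Fin d) ℝ)
    (hA : A.PosDef) (hΔ : Δ.PosSemidef) (hB : B = A + Δ)
    (x : EuclideanSpace ℝ (Fin d)) (hx : ‖x‖ = 1)
    (hquad : 0 ≤ x ⬝ᵥ ((A⁻¹ - (2 : ℝ) • B⁻¹) *ᵥ x))
    (hH : (1 + hΔ.sqrt * A⁻¹ * hΔ.sqrt).IsHermitian) :
    ∃ i : Fin d, 2 ≤ hH.eigenvalues i := by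
  by_contra! hlt
  have hSAS : (1 - hΔ.sqrt * A⁻¹ * hΔ.sqrt).PosDef := by
    have h := hH.posDef_smul_one_sub hlt
    rwa [two_smul, add_sub_add_left_eq_sub] at h
  have hAdet : IsUnit A.det := hA.det_pos.ne'.isUnit
  have hBdet : IsUnit B.det := (hB ▸ hA.add_posSemidef hΔ).det_pos.ne'.isUnit
  have hx0 : (x : Fin d → ℝ) ≠ 0 :=
    (WithLp.ofLp_eq_zero 2).not.mpr (norm_ne_zero_iff.mp (by simp [hx]))
  set y := B⁻¹ *ᵥ x
  have hxy : B *ᵥ y = x := by rw [mulVec_mulVec, mul_nonsing_inv _ hBdet, one_mulVec]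
  have hy : y ≠ 0 := fun h => hx0 (by rw [← hxy, h, mulVec_zero])
  rw [← hxy, hB, dotProduct_inv_sub_two_smul_inv_add_mulVec Δ
    (isHermitian_iff_isSymm.mp hA.isHermitian) hAdet (hB ▸ hBdet)] at hquad
  have hlt' := hA.dotProduct_inv_mulVec_lt_of_posDef_one_sub
    (isHermitian_iff_isSymm.mp hΔ.posSemidef_sqrt.isHermitian) hSAS hy
  rw [hΔ.sqrt_mul_self] at hlt'
  linarith
end

section
/- (Elliptical potential lemma) Let {φ_j}_{j=1}^t be vectors in ℝ^d with ‖φ_j‖ ≤ 1 for all j. Let Λ₀ be a symmetric positive definite d×d matrix whose smallest eigenvalue is at least 1, and define Λ_j = Λ₀ + Σ_{i=1}^j φ_i φ_iᵀ. Then log(det Λ_t / det Λ₀) ≤ Σ_{j=1}^t φ_jᵀ Λ_{j-1}⁻¹ φ_j ≤ 2 log(det Λ_t / det Λ₀). -/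
/-!
By the matrix determinant lemma, `det Λ_{j+1} = det Λ_j * (1 + x_j)` with
`x_j = φ_jᵀ Λ_j⁻¹ φ_j`, so `log (det Λ_t / det Λ₀) = ∑ j, log (1 + x_j)`. Since `Λ_j ≥ Λ₀ ≥ 1` in
the Loewner order, `Λ_j⁻¹ ≤ 1`, hence `0 ≤ x_j ≤ ‖φ_j‖² ≤ 1`, and on `[0, 1]` we have
`log (1 + x) ≤ x ≤ 2 log (1 + x)`.
-/

open Matrix

theorem Real.le_two_mul_log_one_add {x : ℝ} (h0 : 0 ≤ x) (h1 : x ≤ 1) :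
    x ≤ 2 * Real.log (1 + x) := by
  have hlog := Real.one_sub_inv_le_log_of_pos (x := 1 + x) (by linarith)
  have : x / 2 ≤ 1 - (1 + x)⁻¹ := by
    rw [inv_eq_one_div, one_sub_div (by linarith), div_le_div_iff₀ two_pos (by linarith)]
    nlinarith
  linarith

namespace Matrix

variable {n : Type*} [Fintype n] [DecidableEq n]

theorem det_add_vecMulVec {α : Type*} [CommRing α] {A : Matrix n n α} (hA : IsUnit A.det)
    (u v : n → α) : (A + vecMulVec u v).det = A.det * (1 + v ⬝ᵥ (A⁻¹ *ᵥ u)) := by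
  rw [vecMulVec_eq Unit, det_add_replicateCol_mul_replicateRow hA, Matrix.mul_assoc,
    ← replicateCol_mulVec]
  congr 1
  simp [det_unique]

omit [DecidableEq n] in
theorem posSemidef_sum_vecMulVec_self {ι : Type*} (s : Finset ι) (v : ι → n → ℝ) :
    (∑ i ∈ s, vecMulVec (v i) (v i)).PosSemidef :=
  posSemidef_sum s fun i _ => by simpa using posSemidef_vecMulVec_self_star (v i)

open scoped ComplexOrder MatrixOrder in
theorem PosDef.posSemidef_one_sub_inv {𝕜 : Type*} [RCLike 𝕜] {A : Matrix n n 𝕜}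
    (hA : A.PosDef) (h1 : (A - 1).PosSemidef) : (1 - A⁻¹).PosSemidef := by
  set T := CFC.sqrt A
  have hTT : T * T = A := CFC.sqrt_mul_sqrt_self _ hA.posSemidef.nonneg
  have hT : Tᴴ = T := (CFC.sqrt_nonneg A).posSemidef.isHermitian
  have hTunit : IsUnit T.det := by
    have : T.det * T.det ≠ 0 := by rw [← det_mul, hTT]; exact hA.det_pos.ne'
    exact (mul_ne_zero_iff.1 this).1.isUnit
  -- conjugating `A - 1 = T * T - 1` by `T⁻¹` gives `1 - T⁻¹ * T⁻¹ = 1 - A⁻¹`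
  have hconj : T⁻¹ * (A - 1) * (T⁻¹)ᴴ = 1 - A⁻¹ := by
    rw [conjTranspose_nonsing_inv, hT, ← hTT, Matrix.mul_inv_rev, Matrix.mul_sub, Matrix.sub_mul,
      ← Matrix.mul_assoc, nonsing_inv_mul _ hTunit, Matrix.one_mul, mul_nonsing_inv _ hTunit,
      Matrix.mul_one]
  exact hconj ▸ h1.mul_mul_conjTranspose_same T⁻¹

theorem PosDef.dotProduct_inv_mulVec_le {A : Matrix n n ℝ} (hA : A.PosDef)
    (h1 : (A - 1).PosSemidef) (v : n → ℝ) : v ⬝ᵥ (A⁻¹ *ᵥ v) ≤ v ⬝ᵥ v := by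
  simpa [sub_mulVec, dotProduct_sub] using
    (PosDef.posSemidef_one_sub_inv hA h1).dotProduct_mulVec_nonneg v

theorem det_eq_mul_prod_one_add {Λ : ℕ → Matrix n n ℝ} {v : ℕ → n → ℝ}
    (hΛ : ∀ j, Λ (j + 1) = Λ j + vecMulVec (v j) (v j)) (hunit : ∀ j, IsUnit (Λ j).det)
    (t : ℕ) :
    (Λ t).det = (Λ 0).det * ∏ j ∈ Finset.range t, (1 + v j ⬝ᵥ ((Λ j)⁻¹ *ᵥ v j)) := by
  induction t with
  | zero => simp
  | succ t ih => rw [hΛ, det_add_vecMulVec (hunit t), ih, Finset.prod_range_succ, mul_assoc]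

end Matrix

theorem stmt_7 (d t : ℕ) (φ : ℕ → EuclideanSpace ℝ (Fin d))
    (hφ : ∀ j, ‖φ j‖ ≤ 1)
    (Λ₀ : Matrix (Fin d) (Fin d) ℝ) (hΛ₀ : Λ₀.PosDef)
    (hmin : (Λ₀ - 1).PosSemidef)
    (Λ : ℕ → Matrix (Fin d) (Fin d) ℝ)
    (hΛ : ∀ j, Λ j = Λ₀ + ∑ i ∈ Finset.range j, vecMulVec (φ i) (φ i)) :
    Real.log ((Λ t).det / Λ₀.det)
        ≤ ∑ j ∈ Finset.range t, φ j ⬝ᵥ ((Λ j)⁻¹ *ᵥ φ j) ∧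
      ∑ j ∈ Finset.range t, φ j ⬝ᵥ ((Λ j)⁻¹ *ᵥ φ j)
        ≤ 2 * Real.log ((Λ t).det / Λ₀.det) := by
  set x : ℕ → ℝ := fun j => φ j ⬝ᵥ ((Λ j)⁻¹ *ᵥ φ j)
  have hpos j : (Λ j).PosDef := hΛ j ▸ hΛ₀.add_posSemidef (posSemidef_sum_vecMulVec_self _ _)
  have hge j : (Λ j - 1).PosSemidef := by
    rw [hΛ j, add_sub_right_comm]
    exact hmin.add (posSemidef_sum_vecMulVec_self _ _)
  have hx0 j : 0 ≤ x j := by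
    simpa using (hpos j).inv.posSemidef.dotProduct_mulVec_nonneg (φ j)
  have hx1 j : x j ≤ 1 := calc
    x j ≤ φ j ⬝ᵥ φ j := (hpos j).dotProduct_inv_mulVec_le (hge j) _
    _ = ‖φ j‖ ^ 2 := by rw [EuclideanSpace.real_norm_sq_eq]; simp only [dotProduct, sq]
    _ ≤ 1 := pow_le_one₀ (norm_nonneg _) (hφ j)
  have hlog : Real.log ((Λ t).det / Λ₀.det) = ∑ j ∈ Finset.range t, Real.log (1 + x j) := by
    have hstep j : Λ (j + 1) = Λ j + vecMulVec (φ j) (φ j) := by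
      rw [hΛ, hΛ, Finset.sum_range_succ, add_assoc]
    rw [det_eq_mul_prod_one_add hstep (fun j => (hpos j).det_pos.ne'.isUnit) t, hΛ 0,
      Finset.sum_range_zero, add_zero, mul_div_cancel_left₀ _ hΛ₀.det_pos.ne']
    exact Real.log_prod fun j _ => by linarith [hx0 j]
  rw [hlog, Finset.mul_sum]
  refine ⟨Finset.sum_le_sum fun j _ => ?_,
    Finset.sum_le_sum fun j _ => Real.le_two_mul_log_one_add (hx0 j) (hx1 j)⟩
  linarith [Real.log_le_sub_one_of_pos (by linarith [hx0 j] : 0 < 1 + x j)]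
end
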